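/- Let ρ : ℂ⁴ → ℝ be ρ(z) = |z₂|⁴ + |z₃|⁴ + |z₄|⁴ − Re z₁, let γ(θ) = ((2+cosθ)⁴ + (2+sinθ)⁴, 0, 2+sinθ, 2+cosθ), and let e₂ = (0,1,0,0) ∈ ℂ⁴. Then for every θ ∈ ℝ: ∂ρ(γ(θ))(e₂) = 0 (so e₂ lies in the complex tangent space to {ρ=0} at γ(θ)) and L_ρ(γ(θ))(e₂) = 0 (the Levi form of ρ is degenerate in the direction e₂ at every point of the curve). Hence every point γ(θ) is a weakly pseudoconvex point of ∂ω. -/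

import Mathlib

open Complex

/-- The (1,0)-differential `∂ρ(p)(ξ) = (1/2)(Dρ(p)(ξ) - i·Dρ(p)(iξ))`, where `Dρ(p)` is the
real Fréchet derivative of `ρ` at `p`. -/
noncomputable def delForm {E : Type*} [NormedAddCommGroup E] [NormedSpace ℂ E]
    (ρ : E → ℝ) (p ξ : E) : ℂ :=
  (1 / 2 : ℂ) * (((fderiv ℝ ρ p ξ : ℝ) : ℂ)
    - Complex.I * ((fderiv ℝ ρ p (Complex.I • ξ) : ℝ) : ℂ))

/-- The Levi form `L_ρ(p)(ξ) = (1/4)(D²ρ(p)(ξ,ξ) + D²ρ(p)(iξ,iξ))`, where `D²ρ(p)` is the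
second real Fréchet derivative of `ρ` at `p`. -/
noncomputable def leviForm {E : Type*} [NormedAddCommGroup E] [NormedSpace ℂ E]
    (ρ : E → ℝ) (p ξ : E) : ℝ :=
  (1 / 4 : ℝ) * (iteratedFDeriv ℝ 2 ρ p ![ξ, ξ]
    + iteratedFDeriv ℝ 2 ρ p ![Complex.I • ξ, Complex.I • ξ])

noncomputable def Taux : ℂ →L[ℝ] (ℂ →L[ℝ] ℝ) :=
  (((2:ℝ) • Complex.reCLM).smulRight Complex.reCLM) +
  (((2:ℝ) • Complex.imCLM).smulRight Complex.imCLM)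

lemma hasFDerivAt_normSq' (w : ℂ) : HasFDerivAt Complex.normSq (Taux w) w := by
  have hfun : (Complex.normSq : ℂ → ℝ) = fun z => z.re * z.re + z.im * z.im :=
    funext fun z => Complex.normSq_apply z
  rw [hfun]
  have h1 : HasFDerivAt (fun z : ℂ => z.re) Complex.reCLM w := Complex.reCLM.hasFDerivAt
  have h2 : HasFDerivAt (fun z : ℂ => z.im) Complex.imCLM w := Complex.imCLM.hasFDerivAt
  have h := (h1.mul h1).add (h2.mul h2)
  have e : Taux w = w.re • Complex.reCLM + w.re • Complex.reCLM + (w.im • Complex.imCLM + w.im • Complex.imCLM) := by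
    ext z; simp [Taux]; ring
  rw [e]; exact h

noncomputable def phi : ℂ → ℝ := fun w => Complex.normSq w ^ 2

lemma hasFDerivAt_phi (w : ℂ) :
    HasFDerivAt phi ((2 * Complex.normSq w) • Taux w) w := by
  have h := (hasFDerivAt_normSq' w).mul (hasFDerivAt_normSq' w)
  have e1 : phi = ⇑Complex.normSq * ⇑Complex.normSq := by funext z; simp [phi]; ring
  have e2 : (2 * Complex.normSq w) • Taux w = Complex.normSq w • Taux w + Complex.normSq w • Taux w := by
    rw [two_mul, add_smul]
  rw [e1, e2]; exact h

lemma contDiff_phi : ContDiff ℝ 2 phi := by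
  have hre : ContDiff ℝ 2 fun z : ℂ => z.re := Complex.reCLM.contDiff
  have him : ContDiff ℝ 2 fun z : ℂ => z.im := Complex.imCLM.contDiff
  have h : ContDiff ℝ 2 fun z : ℂ => (z.re * z.re + z.im * z.im) ^ 2 :=
    ((hre.mul hre).add (him.mul him)).pow 2
  convert h using 1
  funext z; simp only [phi, Complex.normSq_apply]

lemma fderiv_phi_zero : fderiv ℝ phi 0 = 0 := by
  rw [(hasFDerivAt_phi 0).fderiv]; simp

lemma fderiv2_phi_zero : fderiv ℝ (fderiv ℝ phi) 0 = 0 := by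
  have hfun : fderiv ℝ phi = fun w => (2 * Complex.normSq w) • Taux w :=
    funext fun w => (hasFDerivAt_phi w).fderiv
  rw [hfun]
  have hc : HasFDerivAt (fun w : ℂ => 2 * Complex.normSq w) ((2:ℝ) • Taux 0) 0 :=
    (hasFDerivAt_normSq' 0).const_mul 2
  have hT : HasFDerivAt (fun w : ℂ => Taux w) Taux 0 := Taux.hasFDerivAt
  have h := hc.smul hT
  rw [show fderiv ℝ (fun w : ℂ => (2 * Complex.normSq w) • Taux w) 0 = _ from h.fderiv]
  simp

noncomputable def psi : (Fin 4 → ℂ) → ℝ := fun z =>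
  Complex.normSq (z 2) ^ 2 + Complex.normSq (z 3) ^ 2 - (z 0).re

noncomputable def piAux : (Fin 4 → ℂ) →L[ℝ] (Fin 4 → ℂ) :=
  ContinuousLinearMap.pi (fun i => if i = 1 then 0 else ContinuousLinearMap.proj i)

lemma piAux_apply (z : Fin 4 → ℂ) (i : Fin 4) :
    piAux z i = if i = 1 then 0 else z i := by
  simp [piAux, ContinuousLinearMap.pi_apply, apply_ite (fun f : (Fin 4 → ℂ) →L[ℝ] ℂ => f z)]

lemma psi_comp : psi ∘ piAux = psi := by
  funext z
  simp [psi, Function.comp, piAux_apply]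

lemma contDiff_psi : ContDiff ℝ 2 psi := by
  have h0 : ContDiff ℝ 2 fun z : Fin 4 → ℂ => z 0 := (ContinuousLinearMap.proj 0 : (Fin 4 → ℂ) →L[ℝ] ℂ).contDiff
  have h2 : ContDiff ℝ 2 fun z : Fin 4 → ℂ => z 2 := (ContinuousLinearMap.proj 2 : (Fin 4 → ℂ) →L[ℝ] ℂ).contDiff
  have h3 : ContDiff ℝ 2 fun z : Fin 4 → ℂ => z 3 := (ContinuousLinearMap.proj 3 : (Fin 4 → ℂ) →L[ℝ] ℂ).contDiff
  exact ((contDiff_phi.comp h2).add (contDiff_phi.comp h3)).sub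
    (Complex.reCLM.contDiff.comp h0)

noncomputable def pi1 : (Fin 4 → ℂ) →L[ℝ] ℂ := ContinuousLinearMap.proj 1

lemma key (p : Fin 4 → ℂ) (hp : p 1 = 0) (v : Fin 4 → ℂ) (hv : ∀ i, i ≠ 1 → v i = 0) :
    fderiv ℝ (fun z => phi (z 1) + psi z) p v = 0 ∧
    iteratedFDeriv ℝ 2 (fun z => phi (z 1) + psi z) p ![v, v] = 0 := by
  have hπp : piAux p = p := by
    funext i
    rw [piAux_apply]
    split_ifs with h
    · rw [h, hp]
    · rfl
  have hπv : piAux v = 0 := by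
    funext i
    rw [piAux_apply]
    split_ifs with h
    · rfl
    · exact hv i h
  have hcomp : (fun z : Fin 4 → ℂ => phi (z 1)) = phi ∘ pi1 := rfl
  have hc1 : ContDiff ℝ 2 (phi ∘ pi1) := contDiff_phi.comp pi1.contDiff
  constructor
  · have hadd : fderiv ℝ (fun z => phi (z 1) + psi z) p =
        fderiv ℝ (phi ∘ pi1) p + fderiv ℝ psi p := by
      rw [← fderiv_add (hc1.differentiable (by norm_num) p) (contDiff_psi.differentiable (by norm_num) p)]
      rfl
    rw [hadd]
    have e1 : fderiv ℝ (phi ∘ pi1) p = (fderiv ℝ phi (pi1 p)).comp pi1 := by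
      rw [fderiv_comp p (contDiff_phi.differentiable (by norm_num) _) pi1.differentiableAt,
        pi1.fderiv]
    have e2 : fderiv ℝ psi p = (fderiv ℝ psi (piAux p)).comp piAux := by
      conv_lhs => rw [← psi_comp]
      rw [fderiv_comp p (contDiff_psi.differentiable (by norm_num) _) piAux.differentiableAt,
        piAux.fderiv]
    have hpp : pi1 p = 0 := hp
    simp only [ContinuousLinearMap.add_apply, e1, e2, ContinuousLinearMap.comp_apply, hπv,
      hpp, fderiv_phi_zero, map_zero, ContinuousLinearMap.zero_apply, add_zero]
  · have hadd := iteratedFDeriv_add_apply' (i := 2) (f := phi ∘ pi1) (g := psi) hc1.contDiffAt contDiff_psi.contDiffAt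
      (x := p)
    have : iteratedFDeriv ℝ 2 (fun z => phi (z 1) + psi z) p ![v, v] =
        iteratedFDeriv ℝ 2 (phi ∘ pi1) p ![v, v] + iteratedFDeriv ℝ 2 psi p ![v, v] := by
      have h2 := congrArg (fun M => M ![v, v]) hadd
      exact h2
    rw [this]
    have e1 : iteratedFDeriv ℝ 2 (phi ∘ pi1) p ![v, v] = 0 := by
      rw [pi1.iteratedFDeriv_comp_right contDiff_phi p le_rfl]
      simp only [ContinuousMultilinearMap.compContinuousLinearMap_apply]
      have hpp : pi1 p = 0 := hp
      rw [hpp, iteratedFDeriv_two_apply, fderiv2_phi_zero]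
      simp
    have e2 : iteratedFDeriv ℝ 2 psi p ![v, v] = 0 := by
      conv_lhs => rw [← psi_comp]
      rw [piAux.iteratedFDeriv_comp_right contDiff_psi p le_rfl]
      simp only [ContinuousMultilinearMap.compContinuousLinearMap_apply]
      apply ContinuousMultilinearMap.map_coord_zero _ (0 : Fin 2)
      simp [hπv]
    rw [e1, e2, add_zero]


/-- Along `γ(θ) = ((2+cosθ)⁴ + (2+sinθ)⁴, 0, 2+sinθ, 2+cosθ)` in `∂ω`, the vector
`e₂ = (0,1,0,0)` is complex-tangential (`∂ρ(γ(θ))(e₂) = 0`) and the Levi form vanishes in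
that direction (`L_ρ(γ(θ))(e₂) = 0`); hence every `γ(θ)` is a weakly pseudoconvex point. -/
theorem stmt_9 (ρ : (Fin 4 → ℂ) → ℝ)
    (hρ : ∀ z : Fin 4 → ℂ,
      ρ z = (‖z 1‖) ^ 4 + (‖z 2‖) ^ 4 + (‖z 3‖) ^ 4
              - (z 0).re)
    (γ : ℝ → Fin 4 → ℂ)
    (hγ : ∀ θ : ℝ, γ θ =
      ![(((2 + Real.cos θ) ^ 4 + (2 + Real.sin θ) ^ 4 : ℝ) : ℂ), 0,
        ((2 + Real.sin θ : ℝ) : ℂ), ((2 + Real.cos θ : ℝ) : ℂ)]) :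
    ∀ θ : ℝ,
      delForm ρ (γ θ) ![0, 1, 0, 0] = 0 ∧ leviForm ρ (γ θ) ![0, 1, 0, 0] = 0 := by
  have hρ' : ρ = fun z => phi (z 1) + psi z := by
    funext z
    rw [hρ z]
    have h4 : ∀ w : ℂ, ‖w‖ ^ 4 = Complex.normSq w ^ 2 := by
      intro w
      rw [show (4:ℕ) = 2*2 from rfl, pow_mul, Complex.sq_norm]
    simp only [phi, psi, h4]
    ring
  subst hρ'
  intro θ
  have hp1 : γ θ 1 = 0 := by rw [hγ θ]; simp
  have hv1 : ∀ i, i ≠ 1 → (![0,1,0,0] : Fin 4 → ℂ) i = 0 := by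
    intro i hi; fin_cases i <;> simp_all
  have hv2 : ∀ i, i ≠ 1 → (Complex.I • ![0,1,0,0] : Fin 4 → ℂ) i = 0 := by
    intro i hi
    rw [Pi.smul_apply, hv1 i hi, smul_zero]
  have k1 := key (γ θ) hp1 ![0,1,0,0] hv1
  have k2 := key (γ θ) hp1 (Complex.I • ![0,1,0,0]) hv2
  constructor
  · rw [delForm, k1.1, k2.1]
    simp
  · rw [leviForm, k1.2, k2.2]
    simp
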